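/- Let n ≥ 1 be an integer, z ∈ ℂⁿ with z ≠ 0, λ ∈ ℝ, and ξ ∈ ℂⁿ. Set a = |⟨z̄,ξ⟩|² and b = |z|²|ξ|², where ⟨z̄,ξ⟩ = Σ_m conj(z^m)ξ^m. Then Σ_{k,j,i,q=1}^n R_{kj̄iq̄}(z,λ)·ξ^k·conj(ξ^j)·ξ^i·conj(ξ^q) = ((b−a)·a·(λ−1)² + (b−a)²·(λ+1))/|z|⁸. -/
import Mathlib


open Finset ComplexConjugate

/-- `|z|² = Σₘ |zᵐ|²` for `z ∈ ℂⁿ`. -/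
noncomputable def zsq {n : ℕ} (z : Fin n → ℂ) : ℝ := ∑ m, Complex.normSq (z m)

/-- The Chern curvature tensor `R_{kj̄iq̄}(z,λ)` of the Hermitian metric `ω_λ`
(Lemma 2.1 of the paper). -/
noncomputable def Rten {n : ℕ} (z : Fin n → ℂ) (lam : ℝ) (k j i q : Fin n) : ℂ :=
  (if i = q then 1 else 0)
      * ((if j = k then ((zsq z : ℝ) : ℂ) else 0) - conj (z k) * z j) / ((zsq z : ℝ) : ℂ) ^ 3
    + (lam : ℂ) * ((if i = j then ((zsq z : ℝ) : ℂ) else 0) - conj (z i) * z j)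
        * ((if k = q then ((zsq z : ℝ) : ℂ) else 0) - conj (z k) * z q) / ((zsq z : ℝ) : ℂ) ^ 4
    + ((lam ^ 2 - 2 * lam : ℝ) : ℂ) * conj (z i) * z q
        * ((if k = j then ((zsq z : ℝ) : ℂ) else 0) - conj (z k) * z j) / ((zsq z : ℝ) : ℂ) ^ 4

/-- Holomorphic sectional curvature formula.  For `z ≠ 0`, `λ ∈ ℝ`,
`ξ ∈ ℂⁿ`, with `a = |⟨z̄,ξ⟩|²` and `b = |z|²|ξ|²`,
`Σ R_{kj̄iq̄}(z,λ) ξᵏ ξ̄ʲ ξⁱ ξ̄ᑫ = ((b−a)·a·(λ−1)² + (b−a)²·(λ+1))/|z|⁸`. -/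
theorem sectional_formula (n : ℕ) (hn : 1 ≤ n) (z : Fin n → ℂ) (hz : z ≠ 0)
    (lam : ℝ) (ξ : Fin n → ℂ) :
    ∑ k, ∑ j, ∑ i, ∑ q, Rten z lam k j i q * ξ k * conj (ξ j) * ξ i * conj (ξ q)
      = ((((zsq z * ∑ m, Complex.normSq (ξ m) - Complex.normSq (∑ m, conj (z m) * ξ m))
              * Complex.normSq (∑ m, conj (z m) * ξ m) * (lam - 1) ^ 2
          + (zsq z * ∑ m, Complex.normSq (ξ m)
              - Complex.normSq (∑ m, conj (z m) * ξ m)) ^ 2 * (lam + 1))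
          / (zsq z) ^ 4 : ℝ) : ℂ) := by
  set s : ℂ := ((zsq z : ℝ) : ℂ) with hs_def
  have hspos : 0 < zsq z := by
    obtain ⟨m, hm⟩ : ∃ m, z m ≠ 0 := by
      by_contra h
      push_neg at h
      exact hz (funext h)
    exact Finset.sum_pos' (fun i _ => Complex.normSq_nonneg _)
      ⟨m, Finset.mem_univ m, Complex.normSq_pos.2 hm⟩
  have hs : s ≠ 0 := by
    simp [hs_def, Complex.ofReal_ne_zero, ne_of_gt hspos]
  set p : ℂ := ∑ m, conj (z m) * ξ m with hp_def
  set t : ℂ := ∑ m, ξ m * conj (ξ m) with ht_def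
  have step1 : ∀ k j i q : Fin n,
      Rten z lam k j i q * ξ k * conj (ξ j) * ξ i * conj (ξ q)
      = ((if j = k then s else 0) - conj (z k) * z j) * (ξ k * conj (ξ j))
          * ((if i = q then (1:ℂ) else 0) * (ξ i * conj (ξ q))) * (1 / s ^ 3)
        + ((if i = j then s else 0) - conj (z i) * z j) * (ξ i * conj (ξ j))
          * (((if k = q then s else 0) - conj (z k) * z q) * (ξ k * conj (ξ q)))
          * ((lam : ℂ) / s ^ 4)
        + (conj (z i) * ξ i) * (z q * conj (ξ q))
          * (((if k = j then s else 0) - conj (z k) * z j) * (ξ k * conj (ξ j)))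
          * (((lam ^ 2 - 2 * lam : ℝ) : ℂ) / s ^ 4) := by
    intro k j i q
    simp only [Rten, ← hs_def]
    ring
  simp only [step1, Finset.sum_add_distrib, ← Finset.sum_mul, ← Finset.mul_sum]
  have hconj : conj p = ∑ m, z m * conj (ξ m) := by
    simp [hp_def, map_sum]
  have e1 : ∀ i i1 : Fin n, ((if i1 = i then s else 0) - conj (z i) * z i1) * (ξ i * conj (ξ i1))
      = (if i1 = i then s * (ξ i * conj (ξ i1)) else 0) - (conj (z i) * ξ i) * (z i1 * conj (ξ i1)) := by
    intro i i1; split <;> ring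
  have e2 : ∀ i i1 : Fin n, ((if i1 = i then s else 0) - conj (z i1) * z i) * (ξ i1 * conj (ξ i))
      = (if i1 = i then s * (ξ i1 * conj (ξ i)) else 0) - (conj (z i1) * ξ i1) * (z i * conj (ξ i)) := by
    intro i i1; split <;> ring
  have e3 : ∀ i i1 : Fin n, ((if i = i1 then s else 0) - conj (z i) * z i1) * (ξ i * conj (ξ i1))
      = (if i = i1 then s * (ξ i * conj (ξ i1)) else 0) - (conj (z i) * ξ i) * (z i1 * conj (ξ i1)) := by
    intro i i1; split <;> ring
  have hD1 : ∑ i : Fin n, ∑ i1 : Fin n,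
      ((if i1 = i then s else 0) - conj (z i) * z i1) * (ξ i * conj (ξ i1)) = s * t - p * conj p := by
    simp only [e1, Finset.sum_sub_distrib, Finset.sum_ite_eq, Finset.sum_ite_eq',
      Finset.mem_univ, if_true, ← Finset.mul_sum, ← Finset.sum_mul, ← ht_def, ← hp_def, ← hconj]
  have hD2 : ∑ i : Fin n, ∑ i1 : Fin n,
      (if i = i1 then (1:ℂ) else 0) * (ξ i * conj (ξ i1)) = t := by
    simp only [ite_mul, zero_mul, one_mul, Finset.sum_ite_eq, Finset.sum_ite_eq',
      Finset.mem_univ, if_true, ← ht_def]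
  have hD3 : ∑ i : Fin n, ∑ i1 : Fin n,
      ((if i1 = i then s else 0) - conj (z i1) * z i) * (ξ i1 * conj (ξ i)) = s * t - p * conj p := by
    simp only [e2, Finset.sum_sub_distrib, Finset.sum_ite_eq, Finset.sum_ite_eq',
      Finset.mem_univ, if_true, ← Finset.mul_sum, ← Finset.sum_mul, ← ht_def, ← hp_def, ← hconj]
  have hD4 : ∑ i : Fin n, ∑ i1 : Fin n,
      ((if i = i1 then s else 0) - conj (z i) * z i1) * (ξ i * conj (ξ i1)) = s * t - p * conj p := by
    simp only [e3, Finset.sum_sub_distrib, Finset.sum_ite_eq, Finset.sum_ite_eq',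
      Finset.mem_univ, if_true, ← Finset.mul_sum, ← Finset.sum_mul, ← ht_def, ← hp_def, ← hconj]
  rw [hD1, hD2, hD3, hD4, ← hp_def, ← hconj]
  have ht_real : t = ((∑ m, Complex.normSq (ξ m) : ℝ) : ℂ) := by
    rw [ht_def]; push_cast
    exact Finset.sum_congr rfl fun m _ => (Complex.mul_conj _).symm ▸ rfl
  have hzc : ((zsq z : ℝ) : ℂ) ≠ 0 := hs
  rw [Complex.mul_conj, ht_real, hs_def]
  push_cast
  field_simp
  ring
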